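/- Let ψ be a unit vector in ℂ^d, let k ≥ 1, let p : Fin m → ℝ be a probability vector (p_z ≥ 0 for all z and ∑_z p_z = 1), and let σ_z (z ∈ Fin m) be density matrices on ℂ^d. Then (1/2)‖∑_z p_z σ_z^{⊗k} − (|ψ⟩⟨ψ|)^{⊗k}‖₁ ≤ k · ∑_z p_z √(1 − ⟨ψ|σ_z|ψ⟩). -/

import Mathlib

open Matrix ComplexOrder

noncomputable def traceNorm {n : Type*} [Fintype n] [DecidableEq n]
    (A : Matrix n n ℂ) : ℝ :=
  (((Matrix.posSemidef_conjTranspose_mul_self A).1.eigenvectorUnitary.1 *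
    diagonal (((↑) : ℝ → ℂ) ∘ (√·) ∘ (Matrix.posSemidef_conjTranspose_mul_self A).1.eigenvalues) *
    (star (Matrix.posSemidef_conjTranspose_mul_self A).1.eigenvectorUnitary : Matrix n n ℂ)).trace).re

noncomputable def ketbra {d : ℕ} (ψ : Fin d → ℂ) : Matrix (Fin d) (Fin d) ℂ :=
  fun i j => ψ i * (starRingEnd ℂ) (ψ j)

noncomputable def kronPow {d : ℕ} (M : Matrix (Fin d) (Fin d) ℂ) (k : ℕ) :
    Matrix (Fin k → Fin d) (Fin k → Fin d) ℂ :=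
  fun i j => ∏ t : Fin k, M (i t) (j t)

noncomputable def fid {d : ℕ} (ψ : Fin d → ℂ) (σ : Matrix (Fin d) (Fin d) ℂ) : ℝ :=
  (∑ i, ∑ j, (starRingEnd ℂ) (ψ i) * σ i j * ψ j).re

open scoped MatrixOrder Kronecker

/-!
Put `ρ = |ψ⟩⟨ψ|` and let `σ - ρ = D⁺ - D⁻` be the Jordan decomposition. For the spectral projection
`P` onto the negative part, `tr D⁻ = tr ((ρ - σ) P) = ⟨ψ|P|ψ⟩ - tr (σ P)`, and this is at most
`√(1 - ⟨ψ|σ|ψ⟩)` because the measurement `{P, 1 - P}` does not decrease fidelity, after which only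
distributions on two points remain. Since `tr (σ - ρ) = 0`, also `tr D⁺ = tr D⁻`. Telescoping
`σ^{⊗k} - ρ^{⊗k} = ∑ᵢ σ^{⊗i} ⊗ (D⁺ - D⁻) ⊗ ρ^{⊗(k-1-i)}` writes it as a difference of two positive
semidefinite matrices with traces `k tr D^±`; averaging over `z` and `‖A - B‖₁ ≤ tr A + tr B` for
positive semidefinite `A`, `B` finish the proof.
-/

section TraceNorm
variable {n : Type*} [Fintype n]

theorem Matrix.PosSemidef.re_trace_mul_isStarProjection_nonneg {X P : Matrix n n ℂ}
    (hX : X.PosSemidef) (hP : IsStarProjection P) : 0 ≤ (X * P).trace.re := by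
  have hPH : Pᴴ = P := hP.isSelfAdjoint
  have h := (hX.conjTranspose_mul_mul_same P).trace_nonneg
  rw [hPH, trace_mul_cycle, hP.isIdempotentElem.eq, trace_mul_comm] at h
  exact (Complex.nonneg_iff.mp h).1

variable [DecidableEq n]

theorem Matrix.PosSemidef.re_trace_mul_isStarProjection_le {X P : Matrix n n ℂ}
    (hX : X.PosSemidef) (hP : IsStarProjection P) : (X * P).trace.re ≤ X.trace.re := by
  have h := hX.re_trace_mul_isStarProjection_nonneg hP.one_sub
  rwa [mul_sub, mul_one, trace_sub, Complex.sub_re, sub_nonneg] at h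

theorem traceNorm_eq_re_trace_cfcAbs (A : Matrix n n ℂ) :
    traceNorm A = (CFC.abs A).trace.re := by
  have hAA := Matrix.posSemidef_conjTranspose_mul_self A
  rw [traceNorm, CFC.abs, CFC.sqrt_eq_real_sqrt (star A * A) hAA.nonneg,
    cfcₙ_eq_cfc (hf0 := Real.sqrt_zero), star_eq_conjTranspose A, hAA.1.cfc_eq,
    Matrix.IsHermitian.cfc, Unitary.conjStarAlgAut_apply]
  rfl

theorem Matrix.IsHermitian.exists_isStarProjection_negPart_eq_neg_mul {H : Matrix n n ℂ}
    (hH : H.IsHermitian) : ∃ P, IsStarProjection P ∧ H⁻ = -(H * P) := by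
  have hH' : IsSelfAdjoint H := hH
  set f : ℝ → ℝ := fun x => if x < 0 then 1 else 0
  have hf : ContinuousOn f (spectrum ℝ H) := H.finite_real_spectrum.continuousOn _
  refine ⟨cfc f H, ⟨?_, cfc_predicate f H⟩, ?_⟩
  · rw [IsIdempotentElem, ← cfc_mul f f H]
    exact cfc_congr fun x _ => by by_cases hx : x < 0 <;> simp [f, hx]
  · have hmul : H * cfc f H = cfc (fun x => x * f x) H := by
      rw [cfc_mul (fun x => x) f H, cfc_id' ℝ H]
    rw [CFC.negPart_def, cfcₙ_eq_cfc (hf0 := by simp), hmul, ← cfc_neg]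
    exact cfc_congr fun x _ => by
      by_cases hx : x < 0
      · simp [f, hx, negPart_eq_neg.mpr hx.le]
      · simp [f, hx, negPart_eq_zero.mpr (not_lt.mp hx)]

theorem re_trace_negPart_sub_le {A B : Matrix n n ℂ} (hA : A.PosSemidef) (hB : B.PosSemidef) :
    ((A - B)⁻).trace.re ≤ B.trace.re := by
  obtain ⟨P, hP, hneg⟩ := (hA.1.sub hB.1).exists_isStarProjection_negPart_eq_neg_mul
  rw [hneg, trace_neg, sub_mul, trace_sub, neg_sub, Complex.sub_re]
  linarith [hA.re_trace_mul_isStarProjection_nonneg hP, hB.re_trace_mul_isStarProjection_le hP]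

theorem traceNorm_sub_le {A B : Matrix n n ℂ} (hA : A.PosSemidef) (hB : B.PosSemidef) :
    traceNorm (A - B) ≤ A.trace.re + B.trace.re := by
  rw [traceNorm_eq_re_trace_cfcAbs, ← CFC.posPart_add_negPart _ (hA.1.sub hB.1).isSelfAdjoint,
    ← CFC.negPart_neg, neg_sub, trace_add, Complex.add_re]
  linarith [re_trace_negPart_sub_le hB hA, re_trace_negPart_sub_le hA hB]

theorem traceNorm_sum_smul_sub_sum_smul_le {ι : Type*} [Fintype ι] {p : ι → ℝ}
    (hp : ∀ z, 0 ≤ p z) {A B : ι → Matrix n n ℂ} (hA : ∀ z, (A z).PosSemidef)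
    (hB : ∀ z, (B z).PosSemidef) :
    traceNorm (∑ z, (p z : ℂ) • A z - ∑ z, (p z : ℂ) • B z) ≤
      ∑ z, p z * ((A z).trace.re + (B z).trace.re) := by
  have hp' (z : ι) : (0 : ℂ) ≤ p z := Complex.zero_le_real.mpr (hp z)
  have hre (X : ι → Matrix n n ℂ) :
      (∑ z, (p z : ℂ) • X z).trace.re = ∑ z, p z * (X z).trace.re := by
    simp [trace_sum, trace_smul]
  simp_rw [mul_add]
  rw [Finset.sum_add_distrib, ← hre, ← hre]
  exact traceNorm_sub_le (posSemidef_sum _ fun z _ => (hA z).smul (hp' z))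
    (posSemidef_sum _ fun z _ => (hB z).smul (hp' z))

end TraceNorm

section Fidelity
variable {n : Type*} [Fintype n]

theorem star_dotProduct_self_eq_sum_norm_sq (ψ : n → ℂ) :
    star ψ ⬝ᵥ ψ = ((∑ i, ‖ψ i‖ ^ 2 : ℝ) : ℂ) := by
  simp [dotProduct, Complex.conj_mul']

variable [DecidableEq n]

theorem Matrix.PosSemidef.le_algebraMap_re_trace {M : Matrix n n ℂ} (hM : M.PosSemidef) :
    M ≤ algebraMap ℝ (Matrix n n ℂ) M.trace.re := by
  refine le_algebraMap_of_spectrum_le fun x hx => ?_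
  obtain ⟨i, rfl⟩ := hM.1.spectrum_real_eq_range_eigenvalues ▸ hx
  rw [hM.1.trace_eq_sum_eigenvalues, Complex.re_sum]
  exact Finset.single_le_sum (fun j _ => hM.eigenvalues_nonneg j) (Finset.mem_univ i)

theorem Matrix.PosSemidef.re_dotProduct_mulVec_le {M : Matrix n n ℂ} (hM : M.PosSemidef)
    (x : n → ℂ) : (star x ⬝ᵥ (M *ᵥ x)).re ≤ M.trace.re * (star x ⬝ᵥ x).re := by
  have h := (Matrix.le_iff.mp hM.le_algebraMap_re_trace).dotProduct_mulVec_nonneg x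
  rw [sub_mulVec, dotProduct_sub, Algebra.algebraMap_eq_smul_one, smul_mulVec, one_mulVec,
    dotProduct_smul] at h
  have h' := (Complex.nonneg_iff.mp h).1
  rw [Complex.sub_re, Complex.smul_re, smul_eq_mul] at h'
  linarith

theorem Matrix.PosSemidef.re_dotProduct_mulVec_mulVec_le {σ Q : Matrix n n ℂ}
    (hσ : σ.PosSemidef) (hQ : IsStarProjection Q) (x : n → ℂ) :
    (star (Q *ᵥ x) ⬝ᵥ (σ *ᵥ (Q *ᵥ x))).re ≤ (σ * Q).trace.re * (star x ⬝ᵥ (Q *ᵥ x)).re := by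
  have hQH : Qᴴ = Q := hQ.isSelfAdjoint
  have hQQ : Q * Q = Q := hQ.isIdempotentElem.eq
  have hQx : Q *ᵥ (Q *ᵥ x) = Q *ᵥ x := by rw [mulVec_mulVec, hQQ]
  have hadj (y w : n → ℂ) : star (Q *ᵥ y) ⬝ᵥ w = star y ⬝ᵥ (Q *ᵥ w) := by
    rw [star_mulVec, hQH, dotProduct_mulVec]
  have hlhs : star (Q *ᵥ x) ⬝ᵥ ((Qᴴ * σ * Q) *ᵥ (Q *ᵥ x)) =
      star (Q *ᵥ x) ⬝ᵥ (σ *ᵥ (Q *ᵥ x)) := by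
    rw [hQH, ← mulVec_mulVec, ← mulVec_mulVec, hQx, ← hadj, hQx]
  have hrhs : star (Q *ᵥ x) ⬝ᵥ (Q *ᵥ x) = star x ⬝ᵥ (Q *ᵥ x) := by rw [hadj, hQx]
  have htr : (Qᴴ * σ * Q).trace = (σ * Q).trace := by
    rw [hQH, trace_mul_cycle, hQQ, trace_mul_comm]
  have h := (hσ.conjTranspose_mul_mul_same Q).re_dotProduct_mulVec_le (Q *ᵥ x)
  rwa [hlhs, hrhs, htr] at h

theorem Matrix.PosSemidef.re_dotProduct_mulVec_eq_norm_sq {σ : Matrix n n ℂ} (hσ : σ.PosSemidef)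
    (x : n → ℂ) :
    (star x ⬝ᵥ (σ *ᵥ x)).re = ‖WithLp.toLp 2 (CFC.sqrt σ *ᵥ x)‖ ^ 2 := by
  have hS : (CFC.sqrt σ)ᴴ = CFC.sqrt σ := (CFC.sqrt_nonneg σ).posSemidef.1
  have h : star (CFC.sqrt σ *ᵥ x) ⬝ᵥ (CFC.sqrt σ *ᵥ x) = star x ⬝ᵥ (σ *ᵥ x) := by
    rw [star_mulVec, hS, ← dotProduct_mulVec, mulVec_mulVec, CFC.sqrt_mul_sqrt_self σ hσ.nonneg]
  rw [← h, ← @inner_self_eq_norm_sq ℂ, EuclideanSpace.inner_toLp_toLp, dotProduct_comm]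
  rfl

theorem Matrix.PosSemidef.sqrt_re_dotProduct_mulVec_add_le {σ : Matrix n n ℂ}
    (hσ : σ.PosSemidef) (x y : n → ℂ) :
    √(star (x + y) ⬝ᵥ (σ *ᵥ (x + y))).re ≤
      √(star x ⬝ᵥ (σ *ᵥ x)).re + √(star y ⬝ᵥ (σ *ᵥ y)).re := by
  rw [hσ.re_dotProduct_mulVec_eq_norm_sq x, hσ.re_dotProduct_mulVec_eq_norm_sq y,
    hσ.re_dotProduct_mulVec_eq_norm_sq (x + y)]
  simp only [Real.sqrt_sq_eq_abs, abs_norm, mulVec_add, WithLp.toLp_add]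
  exact norm_add_le _ _

theorem re_dotProduct_one_sub_mulVec {P : Matrix n n ℂ} {ψ : n → ℂ} (hψ : star ψ ⬝ᵥ ψ = 1) :
    (star ψ ⬝ᵥ ((1 - P) *ᵥ ψ)).re = 1 - (star ψ ⬝ᵥ (P *ᵥ ψ)).re := by
  rw [sub_mulVec, one_mulVec, dotProduct_sub, hψ, Complex.sub_re, Complex.one_re]

/-- The right-hand side is the fidelity of the outcome distributions of the measurement
`{P, 1 - P}` on `|ψ⟩⟨ψ|` and on `σ`. -/
theorem Matrix.PosSemidef.re_dotProduct_mulVec_le_sq_sqrt_add_sqrt {σ P : Matrix n n ℂ}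
    (hσ : σ.PosSemidef) (hσtr : σ.trace = 1) (hP : IsStarProjection P) {ψ : n → ℂ}
    (hψ : star ψ ⬝ᵥ ψ = 1) :
    (star ψ ⬝ᵥ (σ *ᵥ ψ)).re ≤
      (√((star ψ ⬝ᵥ (P *ᵥ ψ)).re * (σ * P).trace.re) +
        √((1 - (star ψ ⬝ᵥ (P *ᵥ ψ)).re) * (1 - (σ * P).trace.re))) ^ 2 := by
  have hcompress (Q : Matrix n n ℂ) (hQ : IsStarProjection Q) :
      √(star (Q *ᵥ ψ) ⬝ᵥ (σ *ᵥ (Q *ᵥ ψ))).re ≤ √((star ψ ⬝ᵥ (Q *ᵥ ψ)).re * (σ * Q).trace.re) :=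
    Real.sqrt_le_sqrt (mul_comm ((σ * Q).trace.re) _ ▸ hσ.re_dotProduct_mulVec_mulVec_le hQ ψ)
  have hσP : (σ * (1 - P)).trace.re = 1 - (σ * P).trace.re := by
    rw [mul_sub, mul_one, trace_sub, hσtr, Complex.sub_re, Complex.one_re]
  have hcompl := hcompress (1 - P) hP.one_sub
  rw [re_dotProduct_one_sub_mulVec hψ, hσP] at hcompl
  have hsplit : P *ᵥ ψ + (1 - P) *ᵥ ψ = ψ := by rw [sub_mulVec, one_mulVec, add_sub_cancel]
  have htri := hσ.sqrt_re_dotProduct_mulVec_add_le (P *ᵥ ψ) ((1 - P) *ᵥ ψ)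
  rw [hsplit] at htri
  calc (star ψ ⬝ᵥ (σ *ᵥ ψ)).re = √(star ψ ⬝ᵥ (σ *ᵥ ψ)).re ^ 2 :=
        (Real.sq_sqrt (Complex.nonneg_iff.mp (hσ.dotProduct_mulVec_nonneg ψ)).1).symm
    _ ≤ _ := by gcongr; exact htri.trans (add_le_add (hcompress P hP) hcompl)

end Fidelity

theorem sub_le_sqrt_one_sub_of_le_sq_sqrt_add_sqrt {p s F : ℝ} (hp0 : 0 ≤ p) (hp1 : p ≤ 1)
    (hs0 : 0 ≤ s) (hs1 : s ≤ 1) (hF : F ≤ (√(p * s) + √((1 - p) * (1 - s))) ^ 2) :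
    p - s ≤ √(1 - F) := by
  rw [Real.sqrt_mul hp0, Real.sqrt_mul (by linarith)] at hF
  obtain ⟨X, hX, rfl⟩ : ∃ X, 0 ≤ X ∧ p = X ^ 2 := ⟨√p, Real.sqrt_nonneg _, (Real.sq_sqrt hp0).symm⟩
  obtain ⟨Y, hY, rfl⟩ : ∃ Y, 0 ≤ Y ∧ s = Y ^ 2 := ⟨√s, Real.sqrt_nonneg _, (Real.sq_sqrt hs0).symm⟩
  set X' := √(1 - X ^ 2)
  set Y' := √(1 - Y ^ 2)
  have hX' : X' ^ 2 = 1 - X ^ 2 := Real.sq_sqrt (by linarith)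
  have hY' : Y' ^ 2 = 1 - Y ^ 2 := Real.sq_sqrt (by linarith)
  rw [Real.sqrt_sq hX, Real.sqrt_sq hY] at hF
  have hc : (X * Y + X' * Y') ^ 2 + (X * Y' - X' * Y) ^ 2 = 1 := by
    linear_combination (Y ^ 2 + Y' ^ 2) * hX' + hY'
  have hc' : (X * Y' + X' * Y) ^ 2 + (X * Y - X' * Y') ^ 2 = 1 := by
    linear_combination (Y ^ 2 + Y' ^ 2) * hX' + hY'
  have hdiff : X ^ 2 - Y ^ 2 = (X * Y' - X' * Y) * (X * Y' + X' * Y) := by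
    linear_combination Y ^ 2 * hX' - X ^ 2 * hY'
  refine Real.le_sqrt_of_sq_le ?_
  calc (X ^ 2 - Y ^ 2) ^ 2 = (X * Y' - X' * Y) ^ 2 * (X * Y' + X' * Y) ^ 2 := by rw [hdiff]; ring
    _ ≤ (X * Y' - X' * Y) ^ 2 * 1 := by gcongr; linarith [sq_nonneg (X * Y - X' * Y')]
    _ ≤ 1 - F := by linarith

theorem Matrix.trace_submatrix_equiv {m n R : Type*} [Fintype m] [Fintype n] [AddCommMonoid R]
    (A : Matrix m m R) (e : n ≃ m) : (A.submatrix e e).trace = A.trace :=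
  e.sum_comp fun i => A i i

section KronPow
variable {d : ℕ}

theorem kronPow_zero (M : Matrix (Fin d) (Fin d) ℂ) : kronPow M 0 = 1 := by
  ext i j
  obtain rfl := Subsingleton.elim i j
  simp [kronPow]

theorem kronPow_succ (M : Matrix (Fin d) (Fin d) ℂ) (k : ℕ) :
    kronPow M (k + 1) = (M ⊗ₖ kronPow M k).submatrix (Fin.consEquiv fun _ => Fin d).symm
      (Fin.consEquiv fun _ => Fin d).symm := by
  ext i j
  simp [kronPow, Fin.prod_univ_succ, Fin.consEquiv, Fin.tail]

theorem Matrix.PosSemidef.kronPow {M : Matrix (Fin d) (Fin d) ℂ} (hM : M.PosSemidef) (k : ℕ) :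
    (kronPow M k).PosSemidef := by
  induction k with
  | zero => simpa [kronPow_zero] using PosSemidef.one
  | succ k ih => rw [kronPow_succ]; exact (hM.kronecker ih).submatrix _

theorem trace_kronPow (M : Matrix (Fin d) (Fin d) ℂ) (k : ℕ) :
    (kronPow M k).trace = M.trace ^ k := by
  induction k with
  | zero => simp [kronPow_zero]
  | succ k ih => rw [kronPow_succ, trace_submatrix_equiv, trace_kronecker, ih, pow_succ']

theorem exists_kronPow_sub_kronPow_eq_sub {M N A B : Matrix (Fin d) (Fin d) ℂ}
    (hM : M.PosSemidef) (hN : N.PosSemidef) (hA : A.PosSemidef) (hB : B.PosSemidef)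
    (hMt : M.trace = 1) (hNt : N.trace = 1) (hMN : M - N = A - B) (k : ℕ) :
    ∃ A' B' : Matrix (Fin k → Fin d) (Fin k → Fin d) ℂ, A'.PosSemidef ∧ B'.PosSemidef ∧
      kronPow M k - kronPow N k = A' - B' ∧ A'.trace = k * A.trace ∧ B'.trace = k * B.trace := by
  induction k with
  | zero => exact ⟨0, 0, .zero, .zero, by simp [kronPow_zero], by simp, by simp⟩
  | succ k ih =>
    obtain ⟨A', B', hA', hB', hAB', htA', htB'⟩ := ih
    set e := (Fin.consEquiv fun _ : Fin (k + 1) => Fin d).symm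
    refine ⟨(M ⊗ₖ A' + A ⊗ₖ kronPow N k).submatrix e e,
      (M ⊗ₖ B' + B ⊗ₖ kronPow N k).submatrix e e,
      ((hM.kronecker hA').add (hA.kronecker (hN.kronPow k))).submatrix _,
      ((hM.kronecker hB').add (hB.kronecker (hN.kronPow k))).submatrix _, ?_, ?_, ?_⟩
    · ext i j
      have h1 := congr_fun₂ hAB' (e i).2 (e j).2
      have h2 := congr_fun₂ hMN (e i).1 (e j).1
      simp only [Matrix.sub_apply] at h1 h2
      simp only [kronPow_succ, Matrix.sub_apply, submatrix_apply, Matrix.add_apply,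
        kroneckerMap_apply]
      linear_combination M (e i).1 (e j).1 * h1 + kronPow N k (e i).2 (e j).2 * h2
    all_goals
      simp only [trace_submatrix_equiv, trace_add, trace_kronecker, trace_kronPow, hMt, hNt, htA',
        htB']
      push_cast
      ring

end KronPow

section Ketbra
variable {d : ℕ}

theorem ketbra_eq_vecMulVec (ψ : Fin d → ℂ) : ketbra ψ = vecMulVec ψ (star ψ) := rfl

theorem posSemidef_ketbra (ψ : Fin d → ℂ) : (ketbra ψ).PosSemidef :=
  posSemidef_vecMulVec_self_star ψ

theorem trace_ketbra {ψ : Fin d → ℂ} (hψ : star ψ ⬝ᵥ ψ = 1) : (ketbra ψ).trace = 1 := by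
  rw [ketbra_eq_vecMulVec, trace_vecMulVec, dotProduct_comm, hψ]

theorem fid_eq (ψ : Fin d → ℂ) (σ : Matrix (Fin d) (Fin d) ℂ) :
    fid ψ σ = (star ψ ⬝ᵥ (σ *ᵥ ψ)).re := by
  simp only [fid, dotProduct, mulVec, Finset.mul_sum, Pi.star_apply, Complex.star_def, mul_assoc]

theorem re_trace_ketbra_sub_mul_le {σ P : Matrix (Fin d) (Fin d) ℂ} (hσ : σ.PosSemidef)
    (hσtr : σ.trace = 1) (hP : IsStarProjection P) {ψ : Fin d → ℂ} (hψ : star ψ ⬝ᵥ ψ = 1) :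
    ((ketbra ψ - σ) * P).trace.re ≤ √(1 - fid ψ σ) := by
  have htr : (ketbra ψ * P).trace = star ψ ⬝ᵥ (P *ᵥ ψ) := by
    rw [trace_mul_comm, ketbra_eq_vecMulVec, mul_vecMulVec, trace_vecMulVec, dotProduct_comm]
  have hp := Complex.nonneg_iff.mp (hP.nonneg.posSemidef.dotProduct_mulVec_nonneg ψ)
  have hp' := Complex.nonneg_iff.mp (hP.one_sub.nonneg.posSemidef.dotProduct_mulVec_nonneg ψ)
  rw [sub_mul, trace_sub, Complex.sub_re, htr, fid_eq]
  refine sub_le_sqrt_one_sub_of_le_sq_sqrt_add_sqrt hp.1 ?_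
    (hσ.re_trace_mul_isStarProjection_nonneg hP) ?_
    (hσ.re_dotProduct_mulVec_le_sq_sqrt_add_sqrt hσtr hP hψ)
  · linarith [re_dotProduct_one_sub_mulVec (P := P) hψ, hp'.1]
  · simpa [hσtr] using hσ.re_trace_mul_isStarProjection_le hP

theorem re_trace_negPart_sub_ketbra_le {σ : Matrix (Fin d) (Fin d) ℂ} (hσ : σ.PosSemidef)
    (hσtr : σ.trace = 1) {ψ : Fin d → ℂ} (hψ : star ψ ⬝ᵥ ψ = 1) :
    ((σ - ketbra ψ)⁻).trace.re ≤ √(1 - fid ψ σ) := by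
  obtain ⟨P, hP, hneg⟩ :=
    (hσ.1.sub (posSemidef_ketbra ψ).1).exists_isStarProjection_negPart_eq_neg_mul
  rw [hneg, ← neg_mul, neg_sub]
  exact re_trace_ketbra_sub_mul_le hσ hσtr hP hψ

theorem exists_kronPow_sub_kronPow_ketbra_eq_sub {σ : Matrix (Fin d) (Fin d) ℂ}
    (hσ : σ.PosSemidef) (hσtr : σ.trace = 1) {ψ : Fin d → ℂ} (hψ : star ψ ⬝ᵥ ψ = 1) (k : ℕ) :
    ∃ A B : Matrix (Fin k → Fin d) (Fin k → Fin d) ℂ, A.PosSemidef ∧ B.PosSemidef ∧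
      kronPow σ k - kronPow (ketbra ψ) k = A - B ∧
      A.trace.re + B.trace.re ≤ 2 * k * √(1 - fid ψ σ) := by
  set D := σ - ketbra ψ
  have hD : IsSelfAdjoint D := (hσ.1.sub (posSemidef_ketbra ψ).1).isSelfAdjoint
  have htr : (D⁺).trace = (D⁻).trace := by
    rw [← sub_eq_zero, ← trace_sub, CFC.posPart_sub_negPart D hD, trace_sub, hσtr,
      trace_ketbra hψ, sub_self]
  obtain ⟨A, B, hA, hB, hAB, htA, htB⟩ := exists_kronPow_sub_kronPow_eq_sub hσ
    (posSemidef_ketbra ψ) (CFC.posPart_nonneg D).posSemidef (CFC.negPart_nonneg D).posSemidef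
    hσtr (trace_ketbra hψ) (CFC.posPart_sub_negPart D hD).symm k
  refine ⟨A, B, hA, hB, hAB, ?_⟩
  have hneg := re_trace_negPart_sub_ketbra_le hσ hσtr hψ
  have hk : ((k : ℂ) * (D⁻).trace).re = k * (D⁻).trace.re := by simp
  rw [htA, htB, htr, ← two_mul, hk, mul_assoc]
  gcongr

end Ketbra

theorem mixture_kronPow_trace_dist_le_general {d m : ℕ} (ψ : Fin d → ℂ)
    (hψ : ∑ i, ‖ψ i‖ ^ 2 = 1)
    (k : ℕ)
    (p : Fin m → ℝ) (hp0 : ∀ z, 0 ≤ p z) (hp1 : ∑ z, p z = 1)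
    (σ : Fin m → Matrix (Fin d) (Fin d) ℂ)
    (hσ : ∀ z, (σ z).PosSemidef) (hσtr : ∀ z, (σ z).trace = 1) :
    (1 / 2 : ℝ) * traceNorm (∑ z, (p z : ℂ) • kronPow (σ z) k - kronPow (ketbra ψ) k)
      ≤ (k : ℝ) * ∑ z, p z * Real.sqrt (1 - fid ψ (σ z)) := by
  have hψ' : star ψ ⬝ᵥ ψ = 1 := by rw [star_dotProduct_self_eq_sum_norm_sq, hψ, Complex.ofReal_one]
  choose A B hA hB hAB htr using fun z =>
    exists_kronPow_sub_kronPow_ketbra_eq_sub (hσ z) (hσtr z) hψ' k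
  have hmix : ∑ z, (p z : ℂ) • kronPow (σ z) k - kronPow (ketbra ψ) k =
      ∑ z, (p z : ℂ) • A z - ∑ z, (p z : ℂ) • B z := by
    rw [← Finset.sum_sub_distrib]
    simp_rw [← smul_sub, ← hAB, smul_sub]
    rw [Finset.sum_sub_distrib, ← Finset.sum_smul, ← Complex.ofReal_sum, hp1, Complex.ofReal_one,
      one_smul]
  rw [hmix]
  calc (1 / 2 : ℝ) * traceNorm (∑ z, (p z : ℂ) • A z - ∑ z, (p z : ℂ) • B z)
      ≤ (1 / 2 : ℝ) * ∑ z, p z * ((A z).trace.re + (B z).trace.re) := by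
        gcongr
        exact traceNorm_sum_smul_sub_sum_smul_le hp0 hA hB
    _ ≤ (1 / 2 : ℝ) * ∑ z, p z * (2 * k * √(1 - fid ψ (σ z))) := by
        gcongr with z
        exacts [hp0 z, htr z]
    _ = (k : ℝ) * ∑ z, p z * √(1 - fid ψ (σ z)) := by
        rw [Finset.mul_sum, Finset.mul_sum]
        exact Finset.sum_congr rfl fun z _ => by ring

/-- Mixture of Kronecker powers is close to the pure Kronecker power,
bounded by the average square-root infidelity. -/
theorem mixture_kronPow_trace_dist_le {d m : ℕ} (ψ : Fin d → ℂ)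
    (hψ : ∑ i, ‖ψ i‖ ^ 2 = 1)
    (k : ℕ) (hk : 1 ≤ k)
    (p : Fin m → ℝ) (hp0 : ∀ z, 0 ≤ p z) (hp1 : ∑ z, p z = 1)
    (σ : Fin m → Matrix (Fin d) (Fin d) ℂ)
    (hσ : ∀ z, (σ z).PosSemidef) (hσtr : ∀ z, (σ z).trace = 1) :
    (1 / 2 : ℝ) * traceNorm (∑ z, (p z : ℂ) • kronPow (σ z) k - kronPow (ketbra ψ) k)
      ≤ (k : ℝ) * ∑ z, p z * Real.sqrt (1 - fid ψ (σ z)) :=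
  mixture_kronPow_trace_dist_le_general ψ hψ k p hp0 hp1 σ hσ hσtr
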